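/- Let 𝒲 be a set of walls in ℝ^r and let σ, σ' be two chambers of 𝒲. Then there exist β ∈ σ and γ ∈ σ' such that every point of the closed line segment from β to γ lies on at most one wall of 𝒲. -/

import Mathlib

open Set

/-- The pairing `L(α) = ∑ i, L i * α i` of a rational covector with a real point. -/
def linPair {r : ℕ} (L : Fin r → ℚ) (α : Fin r → ℝ) : ℝ := ∑ i, (L i : ℝ) * α i

/-- A wall in `ℝ^r`: an affine hyperplane of the form `L⁻¹(β)` for a nonzero
`L ∈ ℚ_{≥0}^r` and `β ∈ ℝ`. -/
def IsWall {r : ℕ} (Hy : Set (Fin r → ℝ)) : Prop :=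
  ∃ (L : Fin r → ℚ) (β : ℝ), (∀ i, 0 ≤ L i) ∧ L ≠ 0 ∧ Hy = {α | linPair L α = β}

/-- A set of walls in `ℝ^r`: a set of walls which is finite modulo translation by `ℤ^r`. -/
def IsWallSet {r : ℕ} (W : Set (Set (Fin r → ℝ))) : Prop :=
  (∀ Hy ∈ W, IsWall Hy) ∧
  ∃ W₀ ⊆ W, W₀.Finite ∧ ∀ Hy ∈ W, ∃ (m : Fin r → ℤ), ∃ H₀ ∈ W₀,
    Hy = (fun α => α + fun i => (m i : ℝ)) '' H₀

/-- A chamber of a set of walls `W`: a nonempty set obtained by choosing, for each wall,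
either the strict upper side or the weak lower side, for some partition `W = Wp ⊔ Wm`. -/
def IsChamber {r : ℕ} (W : Set (Set (Fin r → ℝ))) (σ : Set (Fin r → ℝ)) : Prop :=
  σ.Nonempty ∧
  ∃ Wp Wm : Set (Set (Fin r → ℝ)), Wp ∪ Wm = W ∧ Wp ∩ Wm = ∅ ∧
    σ = {α | (∀ Hy ∈ Wp, ∀ (L : Fin r → ℚ) (β : ℝ),
                (∀ i, 0 ≤ L i) → L ≠ 0 → Hy = {x | linPair L x = β} → β < linPair L α) ∧
             (∀ Hy ∈ Wm, ∀ (L : Fin r → ℚ) (β : ℝ),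
                (∀ i, 0 ≤ L i) → L ≠ 0 → Hy = {x | linPair L x = β} → linPair L α ≤ β)}

/-- A wall `L⁻¹(γ)` separates `α` and `β` if `L(α) ≤ γ < L(β)` or `L(β) ≤ γ < L(α)`. -/
def WallSeparates {r : ℕ} (Hy : Set (Fin r → ℝ)) (α β : Fin r → ℝ) : Prop :=
  ∃ (L : Fin r → ℚ) (γ : ℝ), (∀ i, 0 ≤ L i) ∧ L ≠ 0 ∧ Hy = {x | linPair L x = γ} ∧
    ((linPair L α ≤ γ ∧ γ < linPair L β) ∨ (linPair L β ≤ γ ∧ γ < linPair L α))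

/-!
Each chamber contains an open ball whose centre lies on no wall. Starting from a point `α` of the
chamber, slide down the diagonal to `α - τ • 1`. The walls are rational and finite modulo `ℤ^r`, so
the diagonal parameters at which the translates of one wall are crossed form a discrete set, and
for small `τ > 0` no wall is crossed. Since every wall has a nonnegative normal, this moves
strictly below the walls of the weak side while staying strictly above those of the strict side,
with room to spare for a ball.

Fix such a centre `β` for `σ`. For two distinct walls, the endpoints `γ` for which `[β, γ]` meets
their intersection lie on one hyperplane (the join of `β` with a codimension-two subspace), so they
form a null set. There are countably many pairs of walls, so almost every `γ` in the ball inside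
`σ'` works.
-/

open Filter Topology MeasureTheory Matrix

theorem LinearMap.preimage_singleton_eq_of_smul_eq {K M : Type*} [Field K] [AddCommGroup M]
    [Module K M] {f g : M →ₗ[K] K} {a b : K} (ha : a ≠ 0) (hb : b ≠ 0) (hfg : a • g = b • f)
    (u : M) : f ⁻¹' {f u} = g ⁻¹' {g u} := by
  ext x
  have hx := LinearMap.congr_fun hfg x
  have hu := LinearMap.congr_fun hfg u
  simp only [LinearMap.smul_apply, smul_eq_mul] at hx hu
  simp only [mem_preimage, mem_singleton_iff]
  rw [← mul_right_inj' hb, ← hx, ← hu, mul_right_inj' ha]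

section Hyperplanes

variable {E : Type*} [NormedAddCommGroup E] [NormedSpace ℝ E] [MeasurableSpace E] [BorelSpace E]
  [FiniteDimensional ℝ E] (μ : Measure E) [μ.IsAddHaarMeasure]

theorem addHaar_preimage_singleton_linearMap {f : E →ₗ[ℝ] ℝ} (hf : f ≠ 0) (e : ℝ) :
    μ (f ⁻¹' {e}) = 0 := by
  rcases eq_empty_or_nonempty (f ⁻¹' {e}) with h | ⟨p, hp⟩
  · rw [h, measure_empty]
  have hker : f ⁻¹' {e} = (· + -p) ⁻¹' (LinearMap.ker f : Set E) := by
    ext x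
    simp_all [sub_eq_zero, ← sub_eq_add_neg]
  rw [hker, measure_preimage_add_right]
  exact Measure.addHaar_submodule μ _ (mt LinearMap.ker_eq_top.mp hf)

theorem addHaar_setOf_segment_meets_inter {f g : E →ₗ[ℝ] ℝ} {c d : ℝ} (hg : g ≠ 0)
    (hfg : f ⁻¹' {c} ≠ g ⁻¹' {d}) {β : E} (hβ : f β ≠ c) :
    μ {γ | ∃ u ∈ segment ℝ β γ, f u = c ∧ g u = d} = 0 := by
  set a := c - f β
  set b := d - g β
  have ha : a ≠ 0 := sub_ne_zero.mpr hβ.symm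
  by_cases hab : a • g = b • f
  · have hb : b ≠ 0 := by
      rintro hb
      rw [hb, zero_smul, smul_eq_zero] at hab
      exact hab.elim ha hg
    convert measure_empty (μ := μ)
    refine eq_empty_of_forall_notMem fun γ ⟨u, _, hfu, hgu⟩ => hfg ?_
    rw [← hfu, ← hgu]
    exact LinearMap.preimage_singleton_eq_of_smul_eq ha hb hab u
  · refine measure_mono_null ?_ (addHaar_preimage_singleton_linearMap μ (sub_ne_zero.mpr hab)
      (a * g β - b * f β))
    rintro γ ⟨u, ⟨p, q, -, -, hpq, rfl⟩, hfu, hgu⟩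
    simp only [map_add, map_smul, smul_eq_mul] at hfu hgu
    simp only [mem_preimage, mem_singleton_iff, LinearMap.sub_apply, LinearMap.smul_apply,
      smul_eq_mul]
    obtain rfl : p = 1 - q := by linarith
    linear_combination (f γ - f β) * hgu - (g γ - g β) * hfu

end Hyperplanes

section linPair

variable {r : ℕ}

def linPairₗ (L : Fin r → ℚ) : (Fin r → ℝ) →ₗ[ℝ] ℝ := dotProductBilin ℝ ℝ fun i => (L i : ℝ)

theorem linPairₗ_ne_zero {L : Fin r → ℚ} (hL : L ≠ 0) : linPairₗ L ≠ 0 := by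
  obtain ⟨i, hi⟩ := Function.ne_iff.mp hL
  intro h
  have := LinearMap.congr_fun h (Pi.single i 1)
  simp only [linPairₗ, dotProductBilin_apply_apply, dotProduct_single, LinearMap.zero_apply,
    mul_one, Rat.cast_eq_zero] at this
  exact hi this

theorem linPair_add (L : Fin r → ℚ) (x y : Fin r → ℝ) :
    linPair L (x + y) = linPair L x + linPair L y :=
  (linPairₗ L).map_add x y

theorem linPair_sub (L : Fin r → ℚ) (x y : Fin r → ℝ) :
    linPair L (x - y) = linPair L x - linPair L y :=
  (linPairₗ L).map_sub x y

theorem linPair_smul (L : Fin r → ℚ) (c : ℝ) (x : Fin r → ℝ) :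
    linPair L (c • x) = c * linPair L x :=
  (linPairₗ L).map_smul c x

theorem abs_linPair_le {L : Fin r → ℚ} (hL : ∀ i, 0 ≤ L i) (x : Fin r → ℝ) :
    |linPair L x| ≤ linPair L 1 * ‖x‖ := by
  rw [linPair, linPair, Finset.sum_mul]
  refine (Finset.abs_sum_le_sum_abs _ _).trans (Finset.sum_le_sum fun i _ => ?_)
  have hLi : (0 : ℝ) ≤ L i := by exact_mod_cast hL i
  rw [abs_mul, abs_of_nonneg hLi, Pi.one_apply, mul_one]
  exact mul_le_mul_of_nonneg_left (norm_le_pi_norm x i) hLi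

theorem linPair_one_pos {L : Fin r → ℚ} (hL : ∀ i, 0 ≤ L i) (hL0 : L ≠ 0) : 0 < linPair L 1 := by
  obtain ⟨i, hi⟩ := Function.ne_iff.mp hL0
  refine Finset.sum_pos' (fun j _ => by simpa using hL j) ⟨i, Finset.mem_univ i, ?_⟩
  simpa using lt_of_le_of_ne (hL i) (Ne.symm hi)

theorem exists_nat_mul_linPair_intCast (L : Fin r → ℚ) :
    ∃ q : ℕ, 0 < q ∧ ∀ m : Fin r → ℤ, ∃ k : ℤ, q * linPair L (fun i => (m i : ℝ)) = k := by
  refine ⟨∏ i, (L i).den, Finset.prod_pos fun i _ => (L i).den_pos, fun m => ?_⟩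
  have hint : ∀ i, ∃ k : ℤ, ((∏ j, (L j).den : ℕ) : ℝ) * L i = k := by
    intro i
    obtain ⟨c, hc⟩ := Finset.dvd_prod_of_mem (fun j => (L j).den) (Finset.mem_univ i)
    refine ⟨c * (L i).num, ?_⟩
    have hnum : ((L i).den * c : ℚ) * L i = c * (L i).num := by
      rw [← Rat.mul_den_eq_num]
      ring
    rw [hc]
    exact_mod_cast hnum
  choose k hk using hint
  refine ⟨∑ i, k i * m i, ?_⟩
  simp only [linPair, Finset.mul_sum, ← mul_assoc, hk]
  push_cast
  rfl

end linPair

theorem exists_pos_le_sub_intCast (y : ℝ) : ∃ ε > 0, ∀ k : ℤ, (k : ℝ) < y → ε ≤ y - k := by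
  refine ⟨y - ⌈y⌉ + 1, by linarith [Int.ceil_lt_add_one y], fun k hk => ?_⟩
  have : (k : ℝ) ≤ ⌈y⌉ - 1 := by exact_mod_cast Int.le_sub_one_of_lt (Int.lt_ceil.mpr hk)
  linarith

section Walls

variable {r : ℕ}

theorem eventually_notMem_image_add_intCast (L : Fin r → ℚ) (β : ℝ) (α v : Fin r → ℝ)
    (hv : 0 < linPair L v) :
    ∀ᶠ τ in 𝓝[>] (0 : ℝ), ∀ m : Fin r → ℤ,
      α - τ • v ∉ (fun x => x + fun i => (m i : ℝ)) '' {x | linPair L x = β} := by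
  obtain ⟨q, hq, hint⟩ := exists_nat_mul_linPair_intCast L
  obtain ⟨ε, hε, hgap⟩ := exists_pos_le_sub_intCast (q * (linPair L α - β))
  have hqv : 0 < (q : ℝ) * linPair L v := mul_pos (Nat.cast_pos.mpr hq) hv
  filter_upwards [Ioo_mem_nhdsGT (div_pos hε hqv)]
    with τ ⟨hτ, hτε⟩ m ⟨x, (hx : linPair L x = β), hxα⟩
  obtain ⟨k, hk⟩ := hint m
  have hcross : linPair L x + linPair L (fun i => (m i : ℝ)) = linPair L α - τ * linPair L v := by
    beta_reduce at hxα
    rw [← linPair_add, hxα, linPair_sub, linPair_smul]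
  have hτk : q * linPair L v * τ = q * (linPair L α - β) - k := by
    rw [← hk]
    linear_combination (q : ℝ) * hcross - (q : ℝ) * hx
  have := hgap k (by linarith [mul_pos hqv hτ])
  rw [lt_div_iff₀ hqv] at hτε
  linarith

theorem IsWallSet.eventually_sub_smul_one_notMem {W : Set (Set (Fin r → ℝ))} (hW : IsWallSet W)
    (α : Fin r → ℝ) : ∀ᶠ τ in 𝓝[>] (0 : ℝ), ∀ H ∈ W, α - τ • 1 ∉ H := by
  obtain ⟨hwall, W₀, hW₀, hfin, htrans⟩ := hW
  have hbase : ∀ H₀ ∈ W₀, ∀ᶠ τ in 𝓝[>] (0 : ℝ), ∀ m : Fin r → ℤ,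
      α - τ • 1 ∉ (fun x => x + fun i => (m i : ℝ)) '' H₀ := by
    intro H₀ hH₀
    obtain ⟨L, β, hL, hL0, rfl⟩ := hwall H₀ (hW₀ hH₀)
    exact eventually_notMem_image_add_intCast L β α 1 (linPair_one_pos hL hL0)
  filter_upwards [(eventually_all_finite hfin).2 hbase] with τ hτ H hH
  obtain ⟨m, H₀, hH₀, rfl⟩ := htrans H hH
  exact hτ H₀ hH₀ m

theorem linPair_side_of_mem_ball_sub_smul_one {L : Fin r → ℚ} (hL : ∀ i, 0 ≤ L i) (hL0 : L ≠ 0)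
    {β ε : ℝ} {α x : Fin r → ℝ} (hα : ∀ τ ∈ Ioo 0 ε, linPair L (α - τ • 1) ≠ β)
    (hx : x ∈ Metric.ball (α - (ε / 2) • 1) (ε / 4)) :
    (β < linPair L α → β < linPair L x) ∧ (linPair L α ≤ β → linPair L x < β) := by
  have hs := linPair_one_pos hL hL0
  have hε : 0 < ε := by linarith [Metric.pos_of_mem_ball hx]
  have hclose : |linPair L x - (linPair L α - ε / 2 * linPair L 1)| ≤ linPair L 1 * (ε / 4) := by
    rw [← linPair_smul, ← linPair_sub, ← linPair_sub]
    exact (abs_linPair_le hL _).trans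
      (mul_le_mul_of_nonneg_left (mem_ball_iff_norm.mp hx).le hs.le)
  obtain ⟨hlo, hhi⟩ := abs_le.mp hclose
  refine ⟨fun hβ => ?_, fun hβ => by linarith [mul_pos hε hs]⟩
  have hgap : ε * linPair L 1 ≤ linPair L α - β := by
    by_contra! h
    refine hα ((linPair L α - β) / linPair L 1)
      ⟨div_pos (sub_pos.2 hβ) hs, (div_lt_iff₀ hs).2 h⟩ ?_
    rw [linPair_sub, linPair_smul]
    field_simp
    ring
  linarith

theorem IsChamber.exists_ball_subset_center_notMem {W : Set (Set (Fin r → ℝ))}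
    {σ : Set (Fin r → ℝ)} (hW : IsWallSet W) (hσ : IsChamber W σ) :
    ∃ c, ∃ t > 0, Metric.ball c t ⊆ σ ∧ ∀ H ∈ W, c ∉ H := by
  obtain ⟨⟨α, hα⟩, Wp, Wm, rfl, -, rfl⟩ := hσ
  obtain ⟨ε, (hε : 0 < ε), hεW⟩ :=
    mem_nhdsGT_iff_exists_Ioo_subset.mp (hW.eventually_sub_smul_one_notMem α)
  have hside : ∀ H ∈ Wp ∪ Wm, ∀ L β, (∀ i, 0 ≤ L i) → L ≠ 0 → H = {x | linPair L x = β} →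
      ∀ x ∈ Metric.ball (α - (ε / 2) • 1) (ε / 4),
        (β < linPair L α → β < linPair L x) ∧ (linPair L α ≤ β → linPair L x < β) :=
    fun H hH L β hL hL0 hHL x hx => linPair_side_of_mem_ball_sub_smul_one hL hL0
      (fun τ hτ h => hεW hτ H hH (hHL ▸ h)) hx
  refine ⟨α - (ε / 2) • 1, ε / 4, by positivity, fun x hx => ⟨?_, ?_⟩, fun H hH hc => ?_⟩
  · exact fun H hH L β hL hL0 hHL =>
      (hside H (.inl hH) L β hL hL0 hHL x hx).1 (hα.1 H hH L β hL hL0 hHL)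
  · exact fun H hH L β hL hL0 hHL =>
      ((hside H (.inr hH) L β hL hL0 hHL x hx).2 (hα.2 H hH L β hL hL0 hHL)).le
  · obtain ⟨L, β, hL, hL0, hHL⟩ := hW.1 H hH
    have hcside := hside H hH L β hL hL0 hHL _ (Metric.mem_ball_self (by positivity))
    rw [hHL] at hc
    rcases hH with hH | hH
    · exact (hcside.1 (hα.1 H hH L β hL hL0 hHL)).ne' hc
    · exact (hcside.2 (hα.2 H hH L β hL hL0 hHL)).ne hc

theorem IsWallSet.countable {W : Set (Set (Fin r → ℝ))} (hW : IsWallSet W) : W.Countable := by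
  obtain ⟨-, W₀, -, hfin, htrans⟩ := hW
  refine (hfin.countable.biUnion fun H₀ _ =>
    countable_range fun m : Fin r → ℤ => (fun x => x + fun i => (m i : ℝ)) '' H₀).mono ?_
  intro H hH
  obtain ⟨m, H₀, hH₀, rfl⟩ := htrans H hH
  exact mem_biUnion hH₀ ⟨m, rfl⟩

theorem IsWallSet.volume_setOf_segment_not_subsingleton {W : Set (Set (Fin r → ℝ))}
    (hW : IsWallSet W) {β : Fin r → ℝ} (hβ : ∀ H ∈ W, β ∉ H) :
    volume {γ | ∃ u ∈ segment ℝ β γ, ¬ {H ∈ W | u ∈ H}.Subsingleton} = 0 := by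
  have hcount := hW.countable
  refine measure_mono_null
    (t := ⋃ H ∈ W, ⋃ H' ∈ W \ {H}, {γ | ∃ u ∈ segment ℝ β γ, u ∈ H ∧ u ∈ H'}) ?_ ?_
  · rintro γ ⟨u, hu, hnot⟩
    obtain ⟨H, ⟨hH, huH⟩, H', ⟨hH', huH'⟩, hne⟩ := not_subsingleton_iff.mp hnot
    exact mem_biUnion hH (mem_biUnion ⟨hH', hne.symm⟩ ⟨u, hu, huH, huH'⟩)
  refine (measure_biUnion_null_iff hcount).2 fun H hH =>
    (measure_biUnion_null_iff (hcount.mono sdiff_subset)).2 fun H' ⟨hH', hne⟩ => ?_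
  obtain ⟨L, c, -, -, rfl⟩ := hW.1 H hH
  obtain ⟨L', d, -, hL', rfl⟩ := hW.1 H' hH'
  exact addHaar_setOf_segment_meets_inter (f := linPairₗ L) (c := c) (d := d) volume
    (linPairₗ_ne_zero hL') (fun h => hne h.symm) (hβ _ hH)

end Walls

theorem exists_generic_segment_between_chambers_general {r : ℕ}
    (W : Set (Set (Fin r → ℝ))) (hW : IsWallSet W)
    (σ σ' : Set (Fin r → ℝ)) (hσ : IsChamber W σ) (hσ' : IsChamber W σ') :
    ∃ β ∈ σ, ∃ γ ∈ σ', ∀ u ∈ segment ℝ β γ, {Hy ∈ W | u ∈ Hy}.Subsingleton := by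
  obtain ⟨β, s, hs, hβσ, hβW⟩ := hσ.exists_ball_subset_center_notMem hW
  obtain ⟨c, t, ht, hcσ', -⟩ := hσ'.exists_ball_subset_center_notMem hW
  have hgood : (Metric.ball c t \
      {γ | ∃ u ∈ segment ℝ β γ, ¬ {H ∈ W | u ∈ H}.Subsingleton}).Nonempty := by
    refine nonempty_of_measure_ne_zero (μ := volume) ?_
    rw [measure_sdiff_null (hW.volume_setOf_segment_not_subsingleton hβW)]
    exact (Metric.measure_ball_pos volume c ht).ne'
  obtain ⟨γ, hγ, hγgood⟩ := hgood
  exact ⟨β, hβσ (Metric.mem_ball_self hs), γ, hcσ' hγ,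
    fun u hu => not_not.mp fun hbad => hγgood ⟨u, hu, hbad⟩⟩

/-- Given two chambers `σ, σ''` of a set of walls `W`, there exist `β ∈ σ` and `γ ∈ σ''` such
that every point of the closed segment from `β` to `γ` lies on at most one wall of `W`. -/
theorem exists_generic_segment_between_chambers {r : ℕ} (hr : 0 < r)
    (W : Set (Set (Fin r → ℝ))) (hW : IsWallSet W)
    (σ σ' : Set (Fin r → ℝ)) (hσ : IsChamber W σ) (hσ' : IsChamber W σ') :
    ∃ β ∈ σ, ∃ γ ∈ σ', ∀ u ∈ segment ℝ β γ, {Hy ∈ W | u ∈ Hy}.Subsingleton :=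
  exists_generic_segment_between_chambers_general W hW σ σ' hσ hσ'
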